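/- Every reserve system admits a matching that is eligibility-compliant, respects priorities, is non-wasteful, and has maximum cardinality. -/

import Mathlib

open Finset

variable {I C : Type*}

/-- Agent `i` is eligible for category `c` when `i ≻_c ∅`. -/
def Eligible (prio : C → Option I → Option I → Prop) (i : I) (c : C) : Prop :=
  prio c (some i) none

/-- `μ` is a matching: the set of agents assigned to each category `c`
has at most `q c` elements. -/
def IsMatching [Fintype I] [DecidableEq C] (q : C → ℕ) (μ : I → Option C) : Prop :=
  ∀ c : C, (Finset.univ.filter (fun i => μ i = some c)).card ≤ q c

/-- `μ` is eligibility-compliant: assigned agents are eligible. -/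
def Compliant (prio : C → Option I → Option I → Prop) (μ : I → Option C) : Prop :=
  ∀ (i : I) (c : C), μ i = some c → Eligible prio i c

/-- The number of agents matched under `μ`. -/
def matchedCount [Fintype I] (μ : I → Option C) : ℕ :=
  (Finset.univ.filter (fun i => (μ i).isSome)).card

/-- `μ` has maximum cardinality among eligibility-compliant matchings. -/
def MaxCard [Fintype I] [DecidableEq C] (q : C → ℕ)
    (prio : C → Option I → Option I → Prop) (μ : I → Option C) : Prop :=
  ∀ μ' : I → Option C, IsMatching q μ' → Compliant prio μ' →
    matchedCount μ' ≤ matchedCount μ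

/-- Non-wastefulness: an eligible unmatched agent implies the category is full. -/
def NonWasteful [Fintype I] [DecidableEq C] (q : C → ℕ)
    (prio : C → Option I → Option I → Prop) (μ : I → Option C) : Prop :=
  ∀ (i : I) (c : C), Eligible prio i c → μ i = none →
    (Finset.univ.filter (fun j => μ j = some c)).card = q c

/-- Respect for priorities: a matched agent has higher priority (at its
category) than every unmatched agent. -/
def RespectsPriorities (prio : C → Option I → Option I → Prop)
    (μ : I → Option C) : Prop :=
  ∀ (i i' : I) (c : C), μ i = some c → μ i' = none → prio c (some i) (some i')

/-- `μ'` is obtained from `μ` by a swap step at category `c`: an unmatched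
agent `i`, eligible for `c`, replaces the `≻_c`-least agent `i'` currently
assigned to `c`, where `i ≻_c i'`. -/
def SwapStep (prio : C → Option I → Option I → Prop) (c : C)
    (μ μ' : I → Option C) : Prop :=
  ∃ i i' : I,
    μ i = none ∧ Eligible prio i c ∧
    μ i' = some c ∧
    (∀ j : I, μ j = some c → j ≠ i' → prio c (some j) (some i')) ∧
    prio c (some i) (some i') ∧
    μ' i = some c ∧ μ' i' = none ∧
    (∀ j : I, j ≠ i → j ≠ i' → μ' j = μ j)

/-- One swap step between eligibility-compliant matchings. -/
def SwapRel [Fintype I] [DecidableEq C] (q : C → ℕ)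
    (prio : C → Option I → Option I → Prop) (μ μ' : I → Option C) : Prop :=
  IsMatching q μ ∧ Compliant prio μ ∧ IsMatching q μ' ∧ Compliant prio μ' ∧
    ∃ c : C, SwapStep prio c μ μ'

/-- `μ` is terminal: no swap step applies to `μ`. -/
def Terminal (prio : C → Option I → Option I → Prop) (μ : I → Option C) : Prop :=
  ¬ ∃ (i i' : I) (c : C),
      μ i = none ∧ Eligible prio i c ∧ μ i' = some c ∧
      (∀ j : I, μ j = some c → j ≠ i' → prio c (some j) (some i')) ∧
      prio c (some i) (some i')

/-- The strict part `▷` of the precedence preorder, extended to `C ∪ {∅}`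
by `c ▷ ∅` for every category `c`. -/
def StrictPrec (prec : C → C → Prop) : Option C → Option C → Prop
  | some c, some c' => prec c c' ∧ ¬ prec c' c
  | some _, none => True
  | none, _ => False

/-- The number of agents assigned to preferential treatment categories. -/
def benefCount [Fintype I] [DecidableEq C] (Cstar : Finset C)
    (μ : I → Option C) : ℕ :=
  ∑ c ∈ Cstar, (Finset.univ.filter (fun i => μ i = some c)).card

/-- `μ` is a maximum beneficiary assignment. -/
def MaxBenef [Fintype I] [DecidableEq C] (q : C → ℕ)
    (prio : C → Option I → Option I → Prop) (Cstar : Finset C)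
    (μ : I → Option C) : Prop :=
  ∀ μ' : I → Option C, IsMatching q μ' → Compliant prio μ' →
    benefCount Cstar μ' ≤ benefCount Cstar μ

/-- Order preservation by swapping. -/
def OrderPresSwap (prio : C → Option I → Option I → Prop) (prec : C → C → Prop)
    (μ : I → Option C) : Prop :=
  ¬ ∃ (i j : I) (ci cj : C),
      μ i = some ci ∧ μ j = some cj ∧
      StrictPrec prec (some cj) (some ci) ∧
      prio cj (some i) (some j) ∧
      Eligible prio j ci ∧ Eligible prio i cj

/-- Respect for precedence over categories. -/
def RespectsPrec [Fintype I] [DecidableEq C] (q : C → ℕ)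
    (prio : C → Option I → Option I → Prop) (Cstar : Finset C)
    (prec : C → C → Prop) (μ : I → Option C) : Prop :=
  ¬ ∃ (i j : I) (cj : C),
      μ j = some cj ∧
      StrictPrec prec (some cj) (μ i) ∧
      prio cj (some i) (some j) ∧
      ∃ μ' : I → Option C,
        IsMatching q μ' ∧ Compliant prio μ' ∧
        (∀ (k : I) (ck : C), μ k = some ck →
          StrictPrec prec (some ck) (some cj) → μ' k = μ k) ∧
        (∀ ℓ : I, μ ℓ = some cj → prio cj (some ℓ) (some i) → μ' ℓ = μ ℓ) ∧
        μ' i = some cj ∧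
        MaxCard q prio μ' ∧ MaxBenef q prio Cstar μ'

/-- Order preservation for a hybrid sequential reserve system with open
categories `c01` (processed first) and `c02` (processed last). -/
def OrderPresHybrid (prio : C → Option I → Option I → Prop) (Cstar : Finset C)
    (c01 c02 : C) (μ : I → Option C) : Prop :=
  ∀ (i j : I) (cj : C), μ j = some cj → prio cj (some i) (some j) →
    ((∀ ci : C, μ i = some ci → (ci ∈ Cstar ∨ ci = c02) →
        Eligible prio j ci → cj ≠ c01) ∧
     ((cj ∈ Cstar ∨ cj = c01) → Eligible prio i cj → μ i ≠ some c02))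

/-- `P'` is an `i`-improvement of `P`: the orders agree off `i`, and `i`'s
priority weakly increases in every category. -/
def Improves (i : I) (P P' : C → Option I → Option I → Prop) : Prop :=
  ∀ c : C,
    (∀ x y : Option I, x ≠ some i → y ≠ some i → (P' c x y ↔ P c x y)) ∧
    (∀ x : Option I, x ≠ some i → P c (some i) x → P' c (some i) x)

/-! Among eligibility-compliant matchings take one that maximises, lexicographically, first the
number of matched agents and then the sum over matched agents of their rank in the priority order
of their category. It has maximum cardinality by construction. It is non-wasteful, since an
eligible unmatched agent could otherwise be added to a category with a free seat. It respects
priorities, since exchanging a matched agent for an unmatched one of higher priority at that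
category keeps the cardinality and raises the rank sum. -/

theorem Finset.card_filter_comp_equiv {α : Type*} [Fintype α] (σ : α ≃ α) (p : α → Prop)
    [DecidablePred p] : #{x | p (σ x)} = #{x | p x} := by
  simp only [card_filter]
  exact σ.sum_comp fun x => if p x then 1 else 0

theorem Finset.card_filter_update_of_not {α β : Type*} [Fintype α] [DecidableEq α]
    (f : α → β) (p : β → Prop) [DecidablePred p] {a : α} (ha : ¬ p (f a)) (b : β) :
    #{x | p (Function.update f a b x)} = #{x | p (f x)} + if p b then 1 else 0 := by
  split_ifs with hb
  · rw [← card_insert_of_notMem (by simpa using ha)]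
    congr 1
    ext x
    by_cases hx : x = a <;> simp [hx, hb]
  · congr 1
    ext x
    by_cases hx : x = a <;> simp [hx, hb, ha]

theorem Finset.sum_lt_sum_of_eq_off {ι M : Type*} [Fintype ι] [DecidableEq ι]
    [AddCommMonoid M] [PartialOrder M] [IsOrderedCancelAddMonoid M] (s : Finset ι)
    {f g : ι → M} (hoff : ∀ j ∉ s, f j = g j) (hs : ∑ j ∈ s, f j < ∑ j ∈ s, g j) :
    ∑ j, f j < ∑ j, g j := by
  rw [← sum_add_sum_compl s f, ← sum_add_sum_compl s g,
    sum_congr rfl fun j hj => hoff j (mem_compl.1 hj)]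
  exact add_lt_add_left hs _

theorem Set.ncard_setOf_lt_of_rel {α : Type*} [Finite α] {r : α → α → Prop} [IsStrictOrder α r]
    {a b : α} (hab : r a b) : {x | r b x}.ncard < {x | r a x}.ncard :=
  Set.ncard_lt_ncard <| Set.ssubset_iff_of_subset (fun _ hx => _root_.trans hab hx) |>.2
    ⟨b, hab, irrefl b⟩

noncomputable def priorityRank (prio : C → Option I → Option I → Prop) (c : C) (i : I) : ℕ :=
  {x | prio c (some i) x}.ncard

noncomputable def priorityScore [Fintype I] (prio : C → Option I → Option I → Prop)
    (μ : I → Option C) : ℕ :=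
  ∑ i, (μ i).elim 0 (priorityRank prio · i)

section

variable {prio : C → Option I → Option I → Prop} {μ : I → Option C}

theorem Compliant.update [DecidableEq I] (hC : Compliant prio μ) {i : I} {c : C}
    (hi : Eligible prio i c) : Compliant prio (Function.update μ i (some c)) := by
  intro j c' hj
  by_cases hji : j = i
  · subst hji
    obtain rfl : c = c' := by simpa using hj
    exact hi
  · exact hC j c' (by simpa [hji] using hj)

theorem Compliant.comp_swap [DecidableEq I] (hC : Compliant prio μ) {i i' : I} {c : C}
    (hi : μ i = some c) (hi' : μ i' = none) (helig : Eligible prio i' c) :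
    Compliant prio (μ ∘ Equiv.swap i i') := by
  intro j c' hj
  simp only [Function.comp_apply, Equiv.swap_apply_def] at hj
  split_ifs at hj with h₁ h₂
  · simp [hi'] at hj
  · obtain rfl : c = c' := by simpa [hi] using hj
    rwa [h₂]
  · exact hC j c' hj

variable [Fintype I]

theorem matchedCount_comp_equiv (σ : I ≃ I) : matchedCount (μ ∘ σ) = matchedCount μ :=
  card_filter_comp_equiv σ fun j => (μ j).isSome

theorem priorityScore_lt_comp_swap [DecidableEq I] {i i' : I} {c : C}
    [IsStrictOrder (Option I) (prio c)] (hi : μ i = some c) (hi' : μ i' = none)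
    (h : prio c (some i') (some i)) :
    priorityScore prio μ < priorityScore prio (μ ∘ Equiv.swap i i') := by
  have hne : i ≠ i' := by rintro rfl; simp [hi] at hi'
  refine sum_lt_sum_of_eq_off {i, i'} (fun j hj => ?_) ?_
  · simp only [mem_insert, mem_singleton, not_or] at hj
    simp [Equiv.swap_apply_of_ne_of_ne hj.1 hj.2]
  · simpa [sum_pair hne, hi, hi', priorityRank] using Set.ncard_setOf_lt_of_rel h

variable [DecidableEq C] {q : C → ℕ}

theorem isMatching_comp_equiv (σ : I ≃ I) : IsMatching q (μ ∘ σ) ↔ IsMatching q μ :=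
  forall_congr' fun c => by
    simp only [Function.comp_apply, card_filter_comp_equiv σ (μ · = some c)]

theorem MaxCard.nonWasteful (hmax : MaxCard q prio μ) (hM : IsMatching q μ)
    (hC : Compliant prio μ) : NonWasteful q prio μ := by
  classical
  intro i c helig hi
  by_contra hne
  have hlt := lt_of_le_of_ne (hM c) hne
  have hM' : IsMatching q (Function.update μ i (some c)) := by
    intro c'
    rw [card_filter_update_of_not μ (· = some c') (by simp [hi])]
    rcases eq_or_ne c' c with rfl | hc
    · simpa using hlt
    · simpa [hc.symm] using hM c'
  have hcount : matchedCount (Function.update μ i (some c)) = matchedCount μ + 1 := by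
    simp only [matchedCount]
    rw [card_filter_update_of_not μ (fun o => o.isSome) (by simp [hi])]
    simp
  have := hmax _ hM' (hC.update helig)
  omega

theorem respectsPriorities_of_forall_priorityScore_le
    (hstrict : ∀ c : C, IsStrictTotalOrder (Option I) (prio c))
    (hM : IsMatching q μ) (hC : Compliant prio μ)
    (hopt : ∀ ν, IsMatching q ν → Compliant prio ν → matchedCount ν = matchedCount μ →
      priorityScore prio ν ≤ priorityScore prio μ) :
    RespectsPriorities prio μ := by
  classical
  intro i i' c hi hi'
  rcases trichotomous_of (prio c) (some i) (some i') with h | h | h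
  · exact h
  · simp_all
  have helig : Eligible prio i' c := _root_.trans h (hC i c hi)
  exact absurd (hopt _ ((isMatching_comp_equiv _).2 hM) (hC.comp_swap hi hi' helig)
    (matchedCount_comp_equiv _)) (priorityScore_lt_comp_swap hi hi' h).not_ge

theorem exists_maxCard_forall_le_of_matchedCount_eq [Fintype C] (f : (I → Option C) → ℕ) :
    ∃ μ, IsMatching q μ ∧ Compliant prio μ ∧ MaxCard q prio μ ∧
      ∀ ν, IsMatching q ν → Compliant prio ν → matchedCount ν = matchedCount μ → f ν ≤ f μ := by
  classical
  obtain ⟨μ, hμ, hmax⟩ := exists_max_image {μ | IsMatching q μ ∧ Compliant prio μ}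
    (fun μ => toLex (matchedCount μ, f μ))
    ⟨fun _ => none, mem_filter.2 ⟨mem_univ _, by simp [IsMatching], by simp [Compliant]⟩⟩
  simp only [mem_filter, mem_univ, true_and, Prod.Lex.toLex_le_toLex', and_imp] at hμ hmax
  exact ⟨μ, hμ.1, hμ.2, fun ν h₁ h₂ => (hmax ν h₁ h₂).1, fun ν h₁ h₂ => (hmax ν h₁ h₂).2⟩

end

/-- Every reserve system admits a matching that is
eligibility-compliant, respects priorities, is non-wasteful, and has
maximum cardinality. -/
theorem exists_matching_four_axioms
    [Fintype I] [Fintype C] [DecidableEq C]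
    (q : C → ℕ) (prio : C → Option I → Option I → Prop)
    (hstrict : ∀ c : C, IsStrictTotalOrder (Option I) (prio c)) :
    ∃ μ : I → Option C,
      IsMatching q μ ∧ Compliant prio μ ∧ RespectsPriorities prio μ ∧
        NonWasteful q prio μ ∧ MaxCard q prio μ := by
  obtain ⟨μ, hM, hC, hmax, hopt⟩ :=
    exists_maxCard_forall_le_of_matchedCount_eq (q := q) (prio := prio) (priorityScore prio)
  exact ⟨μ, hM, hC, respectsPriorities_of_forall_priorityScore_le hstrict hM hC hopt,
    hmax.nonWasteful hM hC, hmax⟩
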